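/- arXiv:2310.12368 — 4 statements merged into one kernel-verified Lean document; each statement's English description precedes it below -/
import Mathlib

section
/- Let F be an arbitrary field and let A, B be invertible n×n matrices over F. Let E(A) denote the evolution algebra of A: the (nonassociative, commutative) F-algebra whose underlying vector space is F^n and whose product is the bilinear map with (x∗y)_k = Σ_{i=1}^n A_{k i} x_i y_i (so the standard basis vectors satisfy e_i ∗ e_j = 0 for i ≠ j and e_i ∗ e_i = Σ_k A_{k i} e_k), and similarly E(B). Then E(A) and E(B) are isomorphic as F-algebras (i.e., there is an F-linear bijection φ : F^n → F^n with φ(x ∗_A y) = φ(x) ∗_B φ(y) for all x, y) if and only if there exist a permutation σ of {1,…,n} and t = (t_1,…,t_n) ∈ (F^×)^n such that A = D_t^{-1} P_σ^{-1} B P_σ D_t^2, where P_σ is the permutation matrix with (P_σ)_{ij} = 1 exactly when i = σ(j), D_t = diag(t_1,…,t_n), and D_t^2 = diag(t_1^2,…,t_n^2). -/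
/-!
An isomorphism `φ : E(A) ≅ E(B)` kills the products `eᵢ ∗ eⱼ = 0` (`i ≠ j`), so, `B`
being invertible, the vectors `φ eᵢ` have pairwise disjoint supports; being nonzero and
`n` in number, they are nonzero multiples of distinct basis vectors. Hence the matrix of
`φ` is monomial, `M = P_σ D_t`. For such `M` one has `(M x)(M y) = P_σ D_t² (x y)`, so
multiplicativity of `M` amounts to the matrix identity `M A = B P_σ D_t²`, that is,
`A = D_t⁻¹ P_σ⁻¹ B P_σ D_t²`.
-/

open Matrix

/-- The evolution algebra product on `Fin n → F` associated with the structure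
matrix `A`: `(x ∗ y) k = ∑ i, A k i * x i * y i`. -/
def evolMul {F : Type*} [Field F] {n : ℕ} (A : Matrix (Fin n) (Fin n) F)
    (x y : Fin n → F) : Fin n → F :=
  fun k => ∑ i, A k i * x i * y i

/-- The permutation matrix `P_σ` with `(P_σ)_{ij} = 1` exactly when `i = σ j`. -/
def permMatrix (F : Type*) [Field F] {n : ℕ} (σ : Equiv.Perm (Fin n)) :
    Matrix (Fin n) (Fin n) F :=
  Matrix.of fun i j => if i = σ j then 1 else 0

section

variable {F : Type*} [Field F] {n : ℕ}

theorem evolMul_eq_mulVec (A : Matrix (Fin n) (Fin n) F) (x y : Fin n → F) :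
    evolMul A x y = A *ᵥ (x * y) := by
  ext k
  simp [evolMul, mulVec, dotProduct, mul_assoc]

theorem permMatrix_eq_permMatrixHom (σ : Equiv.Perm (Fin n)) :
    permMatrix F σ = permMatrixHom σ := by
  ext i j
  simp [permMatrix, PEquiv.toMatrix_apply, Equiv.toPEquiv_apply, Equiv.symm_apply_eq]

theorem permMatrix_mulVec_eq_comp (σ : Equiv.Perm (Fin n)) (v : Fin n → F) :
    permMatrix F σ *ᵥ v = v ∘ ⇑σ⁻¹ := by
  rw [permMatrix_eq_permMatrixHom, permMatrixHom_apply, Matrix.permMatrix_mulVec]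

theorem permMatrix_mul_permMatrix_inv (σ : Equiv.Perm (Fin n)) :
    permMatrix F σ * permMatrix F σ⁻¹ = 1 := by
  simp only [permMatrix_eq_permMatrixHom, ← map_mul, mul_inv_cancel, map_one]

theorem permMatrix_inv_mul_permMatrix (σ : Equiv.Perm (Fin n)) :
    permMatrix F σ⁻¹ * permMatrix F σ = 1 := by
  simp only [permMatrix_eq_permMatrixHom, ← map_mul, inv_mul_cancel, map_one]

def monomialMatrix (σ : Equiv.Perm (Fin n)) (t : Fin n → Fˣ) :
    (Matrix (Fin n) (Fin n) F)ˣ where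
  val := permMatrix F σ * diagonal fun i => (t i : F)
  inv := diagonal (fun i => (((t i)⁻¹ : Fˣ) : F)) * permMatrix F σ⁻¹
  val_inv := by
    rw [Matrix.mul_assoc, ← Matrix.mul_assoc (diagonal _), diagonal_mul_diagonal]
    simp [permMatrix_mul_permMatrix_inv]
  inv_val := by
    rw [Matrix.mul_assoc, ← Matrix.mul_assoc (permMatrix F σ⁻¹),
      permMatrix_inv_mul_permMatrix]
    simp

theorem monomialMatrix_apply (σ : Equiv.Perm (Fin n)) (t : Fin n → Fˣ) (k j : Fin n) :
    (monomialMatrix σ t : Matrix (Fin n) (Fin n) F) k j =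
      (Pi.single (σ j) (t j : F) : Fin n → F) k := by
  simp [monomialMatrix, permMatrix, mul_diagonal, Pi.single_apply]

theorem monomialMatrix_mulVec_mul_mulVec (σ : Equiv.Perm (Fin n)) (t : Fin n → Fˣ)
    (x y : Fin n → F) :
    (monomialMatrix σ t : Matrix (Fin n) (Fin n) F) *ᵥ x *
        (monomialMatrix σ t : Matrix (Fin n) (Fin n) F) *ᵥ y =
      (permMatrix F σ * diagonal fun i => (t i : F) ^ 2) *ᵥ (x * y) := by
  simp only [monomialMatrix, ← mulVec_mulVec, permMatrix_mulVec_eq_comp]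
  ext k
  simp only [Pi.mul_apply, Function.comp_apply, mulVec_diagonal]
  ring

theorem evolMul_hom_monomialMatrix_iff (A B : Matrix (Fin n) (Fin n) F)
    (σ : Equiv.Perm (Fin n)) (t : Fin n → Fˣ) :
    (∀ x y, (monomialMatrix σ t : Matrix _ _ F) *ᵥ evolMul A x y =
        evolMul B ((monomialMatrix σ t : Matrix _ _ F) *ᵥ x)
          ((monomialMatrix σ t : Matrix _ _ F) *ᵥ y)) ↔
      (monomialMatrix σ t : Matrix _ _ F) * A =
        B * (permMatrix F σ * diagonal fun i => (t i : F) ^ 2) := by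
  simp only [evolMul_eq_mulVec, monomialMatrix_mulVec_mul_mulVec, mulVec_mulVec]
  refine ⟨fun h => mulVec_injective (funext fun v => ?_), fun h x y => by rw [h]⟩
  simpa only [mul_one] using h v 1

theorem eq_conj_iff_monomialMatrix_mul_eq (A B : Matrix (Fin n) (Fin n) F)
    (σ : Equiv.Perm (Fin n)) (t : Fin n → Fˣ) :
    A = diagonal (fun i => (((t i)⁻¹ : Fˣ) : F)) * permMatrix F σ⁻¹ * B * permMatrix F σ *
        diagonal (fun i => (t i : F) ^ 2) ↔
      (monomialMatrix σ t : Matrix _ _ F) * A =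
        B * (permMatrix F σ * diagonal fun i => (t i : F) ^ 2) := by
  rw [← Units.eq_inv_mul_iff_mul_eq]
  simp only [monomialMatrix, Units.inv_mk, Matrix.mul_assoc]

theorem exists_perm_eq_single_of_pairwise_mul_eq_zero {ι K : Type*} [Fintype ι] [DecidableEq ι]
    [GroupWithZero K] (v : ι → ι → K) (hv : ∀ j, v j ≠ 0)
    (hdisj : Pairwise fun i j => v i * v j = 0) :
    ∃ (σ : Equiv.Perm ι) (t : ι → Kˣ), ∀ j, v j = Pi.single (σ j) (t j : K) := by
  choose π hπ using fun j => Function.ne_iff.1 (hv j)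
  have hzero : ∀ i j, i ≠ j → v i (π j) = 0 := fun i j hij =>
    (mul_eq_zero.1 (congrFun (hdisj hij) (π j))).resolve_right (hπ j)
  have hπ_inj : π.Injective := fun i j h => by_contra fun hij => hπ i (h ▸ hzero i j hij)
  set σ := Equiv.ofBijective π hπ_inj.bijective_of_finite
  refine ⟨σ, fun j => Units.mk0 _ (hπ j), fun j => funext fun k => ?_⟩
  obtain ⟨i, rfl⟩ := σ.surjective k
  by_cases hij : i = j
  · subst hij; simp [σ]
  · simp [σ, hπ_inj.ne hij, hzero j i (Ne.symm hij)]

theorem exists_monomialMatrix_of_evolMul_hom {A B : Matrix (Fin n) (Fin n) F}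
    (hB : IsUnit B.det) (φ : (Fin n → F) ≃ₗ[F] (Fin n → F))
    (hφ : ∀ x y, φ (evolMul A x y) = evolMul B (φ x) (φ y)) :
    ∃ (σ : Equiv.Perm (Fin n)) (t : Fin n → Fˣ),
      ∀ x, φ x = (monomialMatrix σ t : Matrix _ _ F) *ᵥ x := by
  have hdisj : Pairwise fun i j => φ (Pi.single i 1) * φ (Pi.single j 1) = 0 := by
    intro i j hij
    apply mulVec_injective_of_isUnit ((isUnit_iff_isUnit_det B).2 hB)
    rw [← evolMul_eq_mulVec, ← hφ, evolMul_eq_mulVec, ← Pi.single_mul_left,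
      Pi.single_eq_of_ne hij, mul_zero, Pi.single_zero, mulVec_zero, map_zero, mulVec_zero]
  obtain ⟨σ, t, hσ⟩ := exists_perm_eq_single_of_pairwise_mul_eq_zero _
    (fun j => φ.map_ne_zero_iff.2 (Pi.single_ne_zero_iff.2 one_ne_zero)) hdisj
  have hmat :
      LinearMap.toMatrix' (φ : (Fin n → F) →ₗ[F] (Fin n → F)) = monomialMatrix σ t := by
    ext k j
    rw [LinearMap.toMatrix'_apply, monomialMatrix_apply]
    exact congrFun (hσ j) k
  exact ⟨σ, t, fun x => by rw [← hmat, LinearMap.toMatrix'_mulVec]; rfl⟩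

end

theorem evolutionAlgebra_iso_iff_general {F : Type*} [Field F] {n : ℕ}
    (A B : Matrix (Fin n) (Fin n) F) (hB : IsUnit B.det) :
    (∃ φ : (Fin n → F) ≃ₗ[F] (Fin n → F),
        ∀ x y, φ (evolMul A x y) = evolMul B (φ x) (φ y)) ↔
      ∃ (σ : Equiv.Perm (Fin n)) (t : Fin n → Fˣ),
        A = Matrix.diagonal (fun i => (((t i)⁻¹ : Fˣ) : F)) * permMatrix F σ⁻¹ * B *
              permMatrix F σ * Matrix.diagonal (fun i => (t i : F) ^ 2) := by
  simp only [eq_conj_iff_monomialMatrix_mul_eq, ← evolMul_hom_monomialMatrix_iff]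
  constructor
  · rintro ⟨φ, hφ⟩
    obtain ⟨σ, t, hφ_eq⟩ := exists_monomialMatrix_of_evolMul_hom hB φ hφ
    exact ⟨σ, t, by simpa only [hφ_eq] using hφ⟩
  · rintro ⟨σ, t, hU⟩
    exact ⟨(GeneralLinearGroup.toLin (monomialMatrix σ t)).toLinearEquiv, hU⟩

/-- Elduque–Labra: for invertible structure matrices `A` and `B`, the evolution algebras
`E(A)` and `E(B)` are isomorphic iff `A = D_t⁻¹ P_σ⁻¹ B P_σ D_t²` for some permutation `σ`
and some `t ∈ (Fˣ)ⁿ`. -/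
theorem evolutionAlgebra_iso_iff {F : Type*} [Field F] {n : ℕ}
    (A B : Matrix (Fin n) (Fin n) F) (hA : IsUnit A.det) (hB : IsUnit B.det) :
    (∃ φ : (Fin n → F) ≃ₗ[F] (Fin n → F),
        ∀ x y, φ (evolMul A x y) = evolMul B (φ x) (φ y)) ↔
      ∃ (σ : Equiv.Perm (Fin n)) (t : Fin n → Fˣ),
        A = Matrix.diagonal (fun i => (((t i)⁻¹ : Fˣ) : F)) * permMatrix F σ⁻¹ * B *
              permMatrix F σ * Matrix.diagonal (fun i => (t i : F) ^ 2) :=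
  evolutionAlgebra_iso_iff_general A B hB
end

section
/- Let q = p^m with p an odd prime and let F_q be a finite field with q elements. The number N(2,F_q) of orbits of the action (σ,t)·A = D_t^{-1} P_σ^{-1} A P_σ D_t^2 of S_2 ⋉ (F_q^×)^2 on GL_2(F_q) is (q+1)^2/2 if 3 divides q−1, and (q+1)^2/2 − 1 if 3 does not divide q−1. -/
/-!
Write `A = !![a, b; c, d]`. The diagonal part of the group sends `(a, b, c, d)` to
`(a / t₀, t₀ b / t₁², t₁ c / t₀², d / t₁)` and the transposition exchanges `a ↔ d`, `b ↔ c`, so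
whether `a` and `d` vanish is an orbit invariant. In each of the resulting cases there is a complete
invariant:
* `a d ≠ 0`: the unordered pair `{a b / d², d c / a²}`, whose product `b c / (a d)` is not `1`;
* exactly one of `a`, `d` is zero: the unit `b² c / d³` (or `c² b / a³`);
* `a = d = 0`: the class of `b c²` modulo cubes, up to inversion. As `F^×` is cyclic, this gives one
  orbit if `3 ∤ q - 1` (everything is a cube) and two otherwise.
Every value of the invariant is attained by exactly one orbit, represented by `!![1, x; y, 1]`,
`!![0, 1; v, 1]`, `!![0, 1; 1, 0]` or `!![0, z; 1, 0]` with `z` a fixed non-cube. In odd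
characteristic there are `(q² - 1) / 2` unordered pairs with product `≠ 1`, so the number of orbits
is `(q² - 1) / 2 + (q - 1) + 2` or `(q² - 1) / 2 + (q - 1) + 1`.
-/

open Matrix

/-- The orbit relation of the action of `Sₙ ⋉ (Fˣ)ⁿ` on `GL n F`:
`A` and `B` are related iff `A = (σ,t)·B = D_t⁻¹ P_σ⁻¹ B P_σ D_t²` for some `(σ,t)`,
equivalently `t_i A_{ij} = B_{σ(i)σ(j)} t_j²` for all `i, j`. -/
def evolRel (F : Type*) [Field F] (n : ℕ) (A B : GL (Fin n) F) : Prop :=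
  ∃ (σ : Equiv.Perm (Fin n)) (t : Fin n → Fˣ), ∀ i j,
    (t i : F) * (A : Matrix (Fin n) (Fin n) F) i j
      = (B : Matrix (Fin n) (Fin n) F) (σ i) (σ j) * (t j : F) ^ 2

/-- The number of orbits of the action of `Sₙ ⋉ (Fˣ)ⁿ` on `GL n F`, which equals the
number of isomorphism classes of `n`-dimensional idempotent evolution algebras over `F`. -/
noncomputable def numOrbits (F : Type*) [Field F] (n : ℕ) : ℕ :=
  Nat.card (Quot (evolRel F n))

/-- The rational-valued indicator `P_k`, equal to `1` if `k ∣ q - 1` and `0` otherwise. -/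
def Pind (q k : ℕ) : ℚ := if k ∣ (q - 1) then 1 else 0

open Finset

def IsCube {M : Type*} [Monoid M] (x : M) : Prop := ∃ y, y ^ 3 = x

section Group

variable {G : Type*} [CommGroup G]

theorem isCube_of_not_three_dvd_card (h : ¬ 3 ∣ Nat.card G) (x : G) : IsCube x :=
  (powCoprime ((Nat.Prime.coprime_iff_not_dvd Nat.prime_three).mpr h).symm).surjective x

variable [Finite G]

theorem exists_not_isCube_of_three_dvd_card (h : 3 ∣ Nat.card G) : ∃ x : G, ¬ IsCube x := by
  have : Fact (Nat.Prime 3) := ⟨Nat.prime_three⟩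
  obtain ⟨ω, hω⟩ := exists_prime_orderOf_dvd_card' (G := G) 3 h
  have hinj : ¬ Function.Injective (fun y : G => y ^ 3) := fun hinj =>
    Nat.prime_three.ne_one (hω ▸ orderOf_eq_one_iff.mpr (hinj (by simp [← hω, pow_orderOf_eq_one])))
  rw [Finite.injective_iff_surjective] at hinj
  simpa [IsCube, Function.Surjective] using hinj

theorem isCube_pow_iff_of_forall_mem_zpowers {g : G} (hg : ∀ x, x ∈ Subgroup.zpowers g)
    (h : 3 ∣ Nat.card G) (k : ℕ) : IsCube (g ^ k) ↔ 3 ∣ k := by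
  refine ⟨fun ⟨y, hy⟩ => ?_, fun ⟨j, hj⟩ => ⟨g ^ j, by rw [hj, ← pow_mul, mul_comm]⟩⟩
  obtain ⟨j, rfl⟩ := mem_powers_iff_mem_zpowers.mpr (hg y)
  rw [← pow_mul, pow_eq_pow_iff_modEq, orderOf_eq_card_of_forall_mem_zpowers hg] at hy
  exact (hy.dvd_iff h).mp (dvd_mul_left 3 j)

theorem isCube_mul_or_isCube_mul_sq [IsCyclic G] {x y : G} (hx : ¬ IsCube x) (hy : ¬ IsCube y) :
    IsCube (x * y) ∨ IsCube (x * y ^ 2) := by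
  have h3 : 3 ∣ Nat.card G := not_not.mp (mt isCube_of_not_three_dvd_card fun h => hx (h x))
  obtain ⟨g, hg⟩ := IsCyclic.exists_generator (α := G)
  obtain ⟨a, rfl⟩ := mem_powers_iff_mem_zpowers.mpr (hg x)
  obtain ⟨b, rfl⟩ := mem_powers_iff_mem_zpowers.mpr (hg y)
  simp only [← pow_mul, ← pow_add, isCube_pow_iff_of_forall_mem_zpowers hg h3] at hx hy ⊢
  rcases (by omega : b % 3 = 1 ∨ b % 3 = 2) with hb | hb <;> omega

end Group

section GroupWithZero

theorem isCube_zero {M : Type*} [MonoidWithZero M] : IsCube (0 : M) := ⟨0, zero_pow three_ne_zero⟩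

theorem ne_zero_of_not_isCube {M : Type*} [MonoidWithZero M] {x : M} (hx : ¬ IsCube x) :
    x ≠ 0 := by
  rintro rfl
  exact hx isCube_zero

variable {M : Type*} [CommGroupWithZero M]

theorem isCube_mul_pow_three_iff {x w : M} (hw : w ≠ 0) : IsCube (x * w ^ 3) ↔ IsCube x := by
  refine ⟨fun ⟨y, hy⟩ => ⟨y / w, ?_⟩, fun ⟨y, hy⟩ => ⟨y * w, by rw [mul_pow, hy]⟩⟩
  rw [div_pow, hy, mul_div_assoc, div_self (pow_ne_zero 3 hw), mul_one]

theorem isCube_sq_iff (x : M) : IsCube (x ^ 2) ↔ IsCube x := by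
  refine ⟨fun ⟨y, hy⟩ => ?_, fun ⟨y, hy⟩ => ⟨y ^ 2, by rw [← hy, ← pow_mul, ← pow_mul, mul_comm]⟩⟩
  rcases eq_or_ne x 0 with rfl | hx
  · exact isCube_zero
  -- `x = (x ^ 2) ^ 2 / x ^ 3`
  refine ⟨y ^ 2 / x, ?_⟩
  rw [div_pow, ← pow_mul, mul_comm, pow_mul, hy]
  field_simp

theorem isCube_coe_units_iff (u : Mˣ) : IsCube (u : M) ↔ IsCube u := by
  refine ⟨fun ⟨y, hy⟩ => ?_, fun ⟨y, hy⟩ => ⟨y, by rw [← hy, Units.val_pow_eq_pow_val]⟩⟩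
  have hy0 : y ≠ 0 := by
    rintro rfl
    exact u.ne_zero (by simpa using hy.symm)
  exact ⟨Units.mk0 y hy0, Units.ext (by simpa using hy)⟩

end GroupWithZero

namespace FiniteField

variable {F : Type*} [Field F] [Fintype F]

theorem isCube_of_not_three_dvd (h : ¬ 3 ∣ Fintype.card F - 1) (x : F) : IsCube x := by
  rcases eq_or_ne x 0 with rfl | hx
  · exact isCube_zero
  rw [← Units.val_mk0 hx, isCube_coe_units_iff]
  exact isCube_of_not_three_dvd_card (by rwa [Nat.card_units, Nat.card_eq_fintype_card]) _

theorem exists_not_isCube (h : 3 ∣ Fintype.card F - 1) : ∃ x : F, ¬ IsCube x := by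
  obtain ⟨u, hu⟩ := exists_not_isCube_of_three_dvd_card (G := Fˣ)
    (by rwa [Nat.card_units, Nat.card_eq_fintype_card])
  exact ⟨u, by rwa [isCube_coe_units_iff]⟩

noncomputable def nonCube (h : 3 ∣ Fintype.card F - 1) : F := (exists_not_isCube h).choose

theorem not_isCube_nonCube (h : 3 ∣ Fintype.card F - 1) : ¬ IsCube (nonCube h) :=
  (exists_not_isCube h).choose_spec

theorem isCube_mul_or_isCube_mul_sq {x y : F} (hx : ¬ IsCube x) (hy : ¬ IsCube y) :
    IsCube (x * y) ∨ IsCube (x * y ^ 2) := by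
  lift x to Fˣ using (ne_zero_of_not_isCube hx).isUnit
  lift y to Fˣ using (ne_zero_of_not_isCube hy).isUnit
  simp only [← Units.val_mul, ← Units.val_pow_eq_pow_val, isCube_coe_units_iff] at hx hy ⊢
  exact _root_.isCube_mul_or_isCube_mul_sq hx hy

end FiniteField

def Sym2.prod {M : Type*} [CommMonoid M] : Sym2 M → M := Sym2.lift ⟨(· * ·), mul_comm⟩

@[simp]
theorem Sym2.prod_mk {M : Type*} [CommMonoid M] (x y : M) : s(x, y).prod = x * y := rfl

theorem Sym2.prod_eq_out_mul {M : Type*} [CommMonoid M] (z : Sym2 M) :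
    z.prod = z.out.1 * z.out.2 := by
  conv_lhs => rw [← Quot.out_eq z]
  rfl

theorem Sym2.card_fiber_add_card_diag_fiber {α : Type*} [Fintype α] [DecidableEq α]
    (z : Sym2 α) : #{p : α × α | s(p.1, p.2) = z} + #{a : α | s(a, a) = z} = 2 := by
  induction z using Sym2.ind with
  | _ a b =>
  by_cases hab : a = b
  · subst hab
    simp [filter_eq']
  · have h₁ : ({p : α × α | s(p.1, p.2) = s(a, b)} : Finset _) = {(a, b), (b, a)} := by
      ext ⟨x, y⟩
      simp
    have h₂ : ({x : α | s(x, x) = s(a, b)} : Finset _) = ∅ := by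
      ext x
      simp only [Sym2.eq_iff, mem_filter, mem_univ, true_and, notMem_empty, iff_false]
      grind
    rw [h₁, h₂, card_pair (by simp [hab]), card_empty]

theorem Sym2.two_mul_card_filter {α : Type*} [Fintype α] [DecidableEq α] (P : Sym2 α → Prop)
    [DecidablePred P] :
    2 * #{z : Sym2 α | P z} = #{p : α × α | P s(p.1, p.2)} + #{a : α | P s(a, a)} := by
  rw [card_eq_sum_card_fiberwise (f := fun p : α × α => s(p.1, p.2)) (t := {z | P z})
      (fun _ h => by simpa using h),
    card_eq_sum_card_fiberwise (f := fun a => s(a, a)) (t := {z | P z})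
      (fun _ h => by simpa using h),
    ← sum_add_distrib, mul_comm, ← smul_eq_mul, ← sum_const]
  refine sum_congr rfl fun z hz => ?_
  rw [← Sym2.card_fiber_add_card_diag_fiber z]
  simp only [mem_filter, mem_univ, true_and] at hz
  congr 2 <;> ext <;> simp only [mem_filter, mem_univ, true_and] <;>
    exact ⟨fun h => ⟨h ▸ hz, h⟩, And.right⟩

namespace FiniteField

variable {F : Type*} [Field F] [Fintype F] [DecidableEq F]

theorem card_filter_mul_eq_one : #{p : F × F | p.1 * p.2 = 1} = Fintype.card F - 1 := by
  rw [← Fintype.card_units, Fintype.card_congr (unitsEquivProdSubtype F), Fintype.card_subtype]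
  simp [mul_comm]

theorem card_filter_mul_self_eq_one (hF : ringChar F ≠ 2) : #{x : F | x * x = 1} = 2 := by
  rw [filter_congr fun x _ => mul_self_eq_one_iff, filter_or, filter_eq', filter_eq',
    if_pos (mem_univ _), if_pos (mem_univ _),
    card_union_of_disjoint (by simp [(Ring.neg_one_ne_one_of_char_ne_two hF).symm]),
    card_singleton, card_singleton]

theorem two_mul_card_filter_sym2_prod_ne_one (hF : ringChar F ≠ 2) :
    2 * #{z : Sym2 F | z.prod ≠ 1} = Fintype.card F ^ 2 - 1 := by
  have h₁ : Fintype.card F - 1 + #{p : F × F | p.1 * p.2 ≠ 1} = Fintype.card F ^ 2 := by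
    rw [← card_filter_mul_eq_one, card_filter_add_card_filter_not, card_univ, Fintype.card_prod,
      sq]
  have h₂ : 2 + #{x : F | x * x ≠ 1} = Fintype.card F := by
    rw [← card_filter_mul_self_eq_one hF, card_filter_add_card_filter_not, card_univ]
  rw [Sym2.two_mul_card_filter]
  -- restate with the decidability instances of `h₁` and `h₂`, so that `omega` sees the same atoms
  change #{p : F × F | p.1 * p.2 ≠ 1} + #{x : F | x * x ≠ 1} = _
  omega

end FiniteField

theorem Equiv.Perm.eq_one_or_eq_swap_fin_two (σ : Equiv.Perm (Fin 2)) :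
    σ = 1 ∨ σ = Equiv.swap 0 1 := by
  revert σ
  decide

section TwoByTwo

variable {F : Type*} [Field F]

def mkGL2 (a b c d : F) (h : a * d - b * c ≠ 0) : GL (Fin 2) F :=
  GeneralLinearGroup.mkOfDetNeZero !![a, b; c, d] (by rwa [det_fin_two_of])

@[simp]
theorem coe_mkGL2 (a b c d : F) (h : a * d - b * c ≠ 0) :
    (mkGL2 a b c d h : Matrix (Fin 2) (Fin 2) F) = !![a, b; c, d] := rfl

theorem fin_two_det_ne_zero (A : GL (Fin 2) F) :
    (A : Matrix (Fin 2) (Fin 2) F) 0 0 * (A : Matrix (Fin 2) (Fin 2) F) 1 1 -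
      (A : Matrix (Fin 2) (Fin 2) F) 0 1 * (A : Matrix (Fin 2) (Fin 2) F) 1 0 ≠ 0 := by
  simpa [det_fin_two] using A.det_ne_zero

theorem mkGL2_eta (A : GL (Fin 2) F) : mkGL2 _ _ _ _ (fin_two_det_ne_zero A) = A :=
  Units.ext (eta_fin_two _).symm

theorem ne_zero_and_ne_zero_of_det_ne_zero {a b c d : F} (h : a * d - b * c ≠ 0)
    (had : a * d = 0) : b ≠ 0 ∧ c ≠ 0 := by
  have hbc : b * c ≠ 0 := by rwa [had, zero_sub, neg_ne_zero] at h
  exact ⟨left_ne_zero_of_mul hbc, right_ne_zero_of_mul hbc⟩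

theorem evolRel_mkGL2_of_scale {a b c d a' b' c' d' t₀ t₁ : F} {h : a * d - b * c ≠ 0}
    {h' : a' * d' - b' * c' ≠ 0} (ht₀ : t₀ ≠ 0) (ht₁ : t₁ ≠ 0)
    (h₀₀ : t₀ * a = a' * t₀ ^ 2) (h₀₁ : t₀ * b = b' * t₁ ^ 2)
    (h₁₀ : t₁ * c = c' * t₀ ^ 2) (h₁₁ : t₁ * d = d' * t₁ ^ 2) :
    evolRel F 2 (mkGL2 a b c d h) (mkGL2 a' b' c' d' h') :=
  ⟨1, ![Units.mk0 t₀ ht₀, Units.mk0 t₁ ht₁], fun i j => by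
    fin_cases i <;> fin_cases j <;> simpa⟩

theorem evolRel_mkGL2_of_swap {a b c d a' b' c' d' t₀ t₁ : F} {h : a * d - b * c ≠ 0}
    {h' : a' * d' - b' * c' ≠ 0} (ht₀ : t₀ ≠ 0) (ht₁ : t₁ ≠ 0)
    (h₀₀ : t₀ * a = d' * t₀ ^ 2) (h₀₁ : t₀ * b = c' * t₁ ^ 2)
    (h₁₀ : t₁ * c = b' * t₀ ^ 2) (h₁₁ : t₁ * d = a' * t₁ ^ 2) :
    evolRel F 2 (mkGL2 a b c d h) (mkGL2 a' b' c' d' h') :=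
  ⟨Equiv.swap 0 1, ![Units.mk0 t₀ ht₀, Units.mk0 t₁ ht₁], fun i j => by
    fin_cases i <;> fin_cases j <;> simpa⟩

variable [Fintype F]

abbrev OrbitInvariant (F : Type*) [Field F] [Fintype F] : Type _ :=
  {z : Sym2 F // z.prod ≠ 1} ⊕ Fˣ ⊕ {cube : Bool // cube = false → 3 ∣ Fintype.card F - 1}

open scoped Classical in
noncomputable def orbitInvariant (a b c d : F) (h : a * d - b * c ≠ 0) : OrbitInvariant F :=
  if ha : a = 0 then
    if hd : d = 0 then
      .inr (.inr ⟨decide (IsCube (b * c ^ 2)), fun hb =>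
        not_not.mp fun h3 => of_decide_eq_false hb (FiniteField.isCube_of_not_three_dvd h3 _)⟩)
    else
      have hbc := ne_zero_and_ne_zero_of_det_ne_zero h (by simp [ha])
      .inr (.inl (Units.mk0 (b ^ 2 * c / d ^ 3) (by simp [hbc, hd])))
  else if hd : d = 0 then
    have hbc := ne_zero_and_ne_zero_of_det_ne_zero h (by simp [hd])
    .inr (.inl (Units.mk0 (c ^ 2 * b / a ^ 3) (by simp [hbc, ha])))
  else
    .inl ⟨s(a * b / d ^ 2, d * c / a ^ 2), by
      rw [Sym2.prod_mk]
      field_simp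
      rw [Ne, div_eq_one_iff_eq (mul_ne_zero ha hd)]
      exact fun h' => h (by rw [h', sub_self])⟩

noncomputable def orbitInvariantGL (A : GL (Fin 2) F) : OrbitInvariant F :=
  orbitInvariant _ _ _ _ (fin_two_det_ne_zero A)

theorem orbitInvariantGL_mkGL2 {a b c d : F} (h : a * d - b * c ≠ 0) :
    orbitInvariantGL (mkGL2 a b c d h) = orbitInvariant a b c d h := rfl

theorem orbitInvariant_scale {a b c d t₀ t₁ : F} (ht₀ : t₀ ≠ 0) (ht₁ : t₁ ≠ 0)
    (h : a * d - b * c ≠ 0) :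
    orbitInvariant (t₀ * a / t₀ ^ 2) (t₀ * b / t₁ ^ 2) (t₁ * c / t₀ ^ 2) (t₁ * d / t₁ ^ 2)
      (by field_simp; exact div_ne_zero h (mul_ne_zero ht₀ ht₁)) = orbitInvariant a b c d h := by
  rcases eq_or_ne a 0 with ha | ha <;> rcases eq_or_ne d 0 with hd | hd
  · simp only [orbitInvariant, ha, hd, mul_zero, zero_div, dite_true, Sum.inr.injEq,
      Subtype.mk.injEq, decide_eq_decide]
    have e : t₀ * b / t₁ ^ 2 * (t₁ * c / t₀ ^ 2) ^ 2 = b * c ^ 2 * t₀⁻¹ ^ 3 := by field_simp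
    rw [e, isCube_mul_pow_three_iff (inv_ne_zero ht₀)]
  · have e : (t₀ * b / t₁ ^ 2) ^ 2 * (t₁ * c / t₀ ^ 2) / (t₁ * d / t₁ ^ 2) ^ 3 =
        b ^ 2 * c / d ^ 3 := by field_simp
    simp [orbitInvariant, ha, hd, ht₁, e]
  · have e : (t₁ * c / t₀ ^ 2) ^ 2 * (t₀ * b / t₁ ^ 2) / (t₀ * a / t₀ ^ 2) ^ 3 =
        c ^ 2 * b / a ^ 3 := by field_simp
    simp [orbitInvariant, ha, hd, ht₀, e]
  · have e₁ : t₀ * a / t₀ ^ 2 * (t₀ * b / t₁ ^ 2) / (t₁ * d / t₁ ^ 2) ^ 2 = a * b / d ^ 2 := by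
      field_simp
    have e₂ : t₁ * d / t₁ ^ 2 * (t₁ * c / t₀ ^ 2) / (t₀ * a / t₀ ^ 2) ^ 2 = d * c / a ^ 2 := by
      field_simp
    simp [orbitInvariant, ha, hd, ht₀, ht₁, e₁, e₂]

theorem orbitInvariant_swap {a b c d : F} (h : a * d - b * c ≠ 0) :
    orbitInvariant d c b a (by rwa [mul_comm d, mul_comm c]) = orbitInvariant a b c d h := by
  rcases eq_or_ne a 0 with ha | ha <;> rcases eq_or_ne d 0 with hd | hd
  · simp only [orbitInvariant, ha, hd, dite_true, Sum.inr.injEq, Subtype.mk.injEq,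
      decide_eq_decide]
    obtain ⟨hb, hc⟩ := ne_zero_and_ne_zero_of_det_ne_zero h (by simp [ha])
    have e : c * b ^ 2 = (b * c ^ 2) ^ 2 * c⁻¹ ^ 3 := by field_simp
    rw [e, isCube_mul_pow_three_iff (inv_ne_zero hc), isCube_sq_iff]
  · simp [orbitInvariant, ha, hd]
  · simp [orbitInvariant, ha, hd]
  · simp [orbitInvariant, ha, hd, Sym2.eq_swap]

theorem orbitInvariantGL_eq_of_evolRel {A B : GL (Fin 2) F} (hAB : evolRel F 2 A B) :
    orbitInvariantGL A = orbitInvariantGL B := by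
  obtain ⟨σ, t, hrel⟩ := hAB
  have hB (i j : Fin 2) : (B : Matrix (Fin 2) (Fin 2) F) (σ i) (σ j) =
      t i * (A : Matrix (Fin 2) (Fin 2) F) i j / t j ^ 2 := by
    rw [hrel, mul_div_cancel_right₀ _ (by simp)]
  rcases σ.eq_one_or_eq_swap_fin_two with rfl | rfl
  · simp only [Equiv.Perm.one_apply] at hB
    simp only [orbitInvariantGL, hB]
    exact (orbitInvariant_scale (t 0).ne_zero (t 1).ne_zero _).symm
  · have h₀₀ := hB 0 0
    have h₀₁ := hB 0 1
    have h₁₀ := hB 1 0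
    have h₁₁ := hB 1 1
    simp only [Equiv.swap_apply_left, Equiv.swap_apply_right] at h₀₀ h₀₁ h₁₀ h₁₁
    simp only [orbitInvariantGL, h₀₀, h₀₁, h₁₀, h₁₁]
    exact ((orbitInvariant_swap _).trans
      (orbitInvariant_scale (t 0).ne_zero (t 1).ne_zero _)).symm

noncomputable def orbitRep : OrbitInvariant F → Quot (evolRel F 2)
  | .inl z => Quot.mk _ (mkGL2 1 z.1.out.1 z.1.out.2 1
      (by rw [one_mul, sub_ne_zero, ne_comm, ← Sym2.prod_eq_out_mul]; exact z.2))
  | .inr (.inl v) => Quot.mk _ (mkGL2 0 1 v 1 (by simp))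
  | .inr (.inr ⟨true, _⟩) => Quot.mk _ (mkGL2 0 1 1 0 (by simp))
  | .inr (.inr ⟨false, h⟩) => Quot.mk _ (mkGL2 0 (FiniteField.nonCube (h rfl)) 1 0
      (by simpa using ne_zero_of_not_isCube (FiniteField.not_isCube_nonCube (h rfl))))

theorem orbitRep_inl {x y : F} (h : s(x, y).prod ≠ 1) :
    orbitRep (.inl ⟨s(x, y), h⟩) =
      Quot.mk _ (mkGL2 1 x y 1 (by rw [one_mul, sub_ne_zero, ne_comm]; exact h)) := by
  obtain ⟨p, hp⟩ : ∃ p, Quot.out s(x, y) = p := ⟨_, rfl⟩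
  have : s(p.1, p.2) = s(x, y) := hp ▸ Quot.out_eq _
  simp only [orbitRep, hp]
  rcases Sym2.eq_iff.mp this with ⟨h₁, h₂⟩ | ⟨h₁, h₂⟩
  · simp only [h₁, h₂]
  · exact Quot.sound (evolRel_mkGL2_of_swap one_ne_zero one_ne_zero (by simp) (by simp [h₁])
      (by simp [h₂]) (by simp))

theorem orbitRep_orbitInvariant_antidiagonal {b c : F} (h : 0 * 0 - b * c ≠ 0) :
    orbitRep (orbitInvariant 0 b c 0 h) = Quot.mk _ (mkGL2 0 b c 0 h) := by
  obtain ⟨hb, hc⟩ := ne_zero_and_ne_zero_of_det_ne_zero h (by simp)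
  by_cases hu : IsCube (b * c ^ 2)
  · obtain ⟨w, hw⟩ := id hu
    have hw0 : w ≠ 0 := by rintro rfl; simp [hb, hc] at hw
    simp only [orbitInvariant, dite_true, hu, decide_true, orbitRep]
    refine Quot.sound (evolRel_mkGL2_of_scale (t₀ := w⁻¹) (t₁ := c / w ^ 2) (by simpa)
      (by simp [hc, hw0]) (by simp) ?_ (by field_simp) (by simp))
    field_simp
    linear_combination hw
  · simp only [orbitInvariant, dite_true, hu, decide_false, orbitRep]
    generalize_proofs h3
    have hz := FiniteField.not_isCube_nonCube h3
    have hz0 := ne_zero_of_not_isCube hz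
    -- `z` is congruent modulo cubes to `b c²` or to its inverse; in the first case the
    -- transposition, which inverts the class of `b c²`, is needed.
    rcases FiniteField.isCube_mul_or_isCube_mul_sq hz hu with ⟨w, hw⟩ | ⟨w, hw⟩
    · have hw0 : w ≠ 0 := by rintro rfl; simp [hb, hc, hz0] at hw
      refine Quot.sound (evolRel_mkGL2_of_swap (t₀ := w / (b * c))
        (t₁ := b * (w / (b * c)) ^ 2) (by simp [*]) (by simp [*]) (by simp) ?_ (by ring)
        (by simp))
      field_simp
      linear_combination -hw
    · have hw0 : w ≠ 0 := by rintro rfl; simp [hb, hc, hz0] at hw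
      refine Quot.sound (evolRel_mkGL2_of_scale (t₀ := w / (b * c ^ 2))
        (t₁ := c * (w / (b * c ^ 2)) ^ 2) (by simp [*]) (by simp [*]) (by simp) ?_ (by ring)
        (by simp))
      field_simp
      linear_combination -hw

theorem orbitRep_orbitInvariant {a b c d : F} (h : a * d - b * c ≠ 0) :
    orbitRep (orbitInvariant a b c d h) = Quot.mk _ (mkGL2 a b c d h) := by
  rcases eq_or_ne a 0 with rfl | ha <;> rcases eq_or_ne d 0 with rfl | hd
  · exact orbitRep_orbitInvariant_antidiagonal h
  · obtain ⟨hb, hc⟩ := ne_zero_and_ne_zero_of_det_ne_zero h (by simp)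
    simp only [orbitInvariant, dite_true, hd, dite_false, orbitRep, Units.val_mk0]
    exact Quot.sound (evolRel_mkGL2_of_scale (t₀ := b / d ^ 2) (t₁ := d⁻¹) (by simp [*])
      (by simp [*]) (by simp) (by field_simp) (by field_simp) (by field_simp))
  · obtain ⟨hb, hc⟩ := ne_zero_and_ne_zero_of_det_ne_zero h (by simp)
    simp only [orbitInvariant, ha, dite_true, dite_false, orbitRep, Units.val_mk0]
    exact Quot.sound (evolRel_mkGL2_of_swap (t₀ := c / a ^ 2) (t₁ := a⁻¹) (by simp [*])
      (by simp [*]) (by simp) (by field_simp) (by field_simp) (by field_simp))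
  · simp only [orbitInvariant, ha, hd, dite_false, orbitRep_inl]
    exact Quot.sound (evolRel_mkGL2_of_scale (t₀ := a⁻¹) (t₁ := d⁻¹) (by simp [*])
      (by simp [*]) (by field_simp) (by field_simp) (by field_simp) (by field_simp))

theorem orbitRep_orbitInvariantGL (A : GL (Fin 2) F) :
    orbitRep (orbitInvariantGL A) = Quot.mk _ A :=
  (orbitRep_orbitInvariant _).trans (congrArg _ (mkGL2_eta A))

theorem orbitInvariantGL_orbitRep (x : OrbitInvariant F) :
    Quot.lift orbitInvariantGL (fun _ _ => orbitInvariantGL_eq_of_evolRel) (orbitRep x) = x := by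
  rcases x with ⟨z, hz⟩ | v | ⟨_ | _, h⟩
  · induction z using Sym2.ind with
    | _ x y => simp [orbitRep_inl, orbitInvariantGL_mkGL2, orbitInvariant]
  · simp [orbitRep, orbitInvariantGL_mkGL2, orbitInvariant]
  · simp [orbitRep, orbitInvariantGL_mkGL2, orbitInvariant,
      FiniteField.not_isCube_nonCube (h rfl)]
  · simp [orbitRep, orbitInvariantGL_mkGL2, orbitInvariant, show IsCube (1 : F) from ⟨1, one_pow 3⟩]

noncomputable def orbitEquiv : Quot (evolRel F 2) ≃ OrbitInvariant F where
  toFun := Quot.lift orbitInvariantGL fun _ _ => orbitInvariantGL_eq_of_evolRel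
  invFun := orbitRep
  left_inv := Quot.ind orbitRep_orbitInvariantGL
  right_inv := orbitInvariantGL_orbitRep

theorem card_orbitInvariant [DecidableEq F] :
    Nat.card (OrbitInvariant F) = #{z : Sym2 F | z.prod ≠ 1} +
      (Fintype.card F - 1 + if 3 ∣ Fintype.card F - 1 then 2 else 1) := by
  rw [Nat.card_sum, Nat.card_sum, Nat.card_eq_fintype_card, Fintype.card_subtype, Nat.card_units,
    Nat.card_eq_fintype_card]
  split_ifs with h3 <;> simp [h3]

end TwoByTwo

theorem numOrbits_two_char_odd_general {F : Type*} [Field F] [Fintype F] [DecidableEq F]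
    (p m q : ℕ) (hp : p.Prime) (hodd : p ≠ 2) (hq : q = p ^ m)
    (hcard : Fintype.card F = q) :
    (numOrbits F 2 : ℚ) =
      if 3 ∣ (q - 1) then ((q : ℚ) + 1) ^ 2 / 2
      else ((q : ℚ) + 1) ^ 2 / 2 - 1 := by
  have hF : ringChar F ≠ 2 := by
    rw [Ne, FiniteField.even_card_iff_char_two, hcard, hq, ← Nat.even_iff]
    exact Nat.not_even_iff_odd.mpr ((hp.odd_of_ne_two hodd).pow)
  have hpairs := FiniteField.two_mul_card_filter_sym2_prod_ne_one hF
  have hq₁ : 1 ≤ q := hcard ▸ Fintype.card_pos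
  rw [hcard] at hpairs
  have hpairsℚ := congrArg (Nat.cast : ℕ → ℚ) hpairs
  push_cast [Nat.cast_sub (Nat.one_le_pow _ _ hq₁)] at hpairsℚ
  rw [numOrbits, Nat.card_congr orbitEquiv, card_orbitInvariant, hcard]
  split_ifs <;> push_cast [Nat.cast_sub hq₁] <;> linarith

/-- The number of isomorphism classes of 2-dimensional idempotent evolution algebras
over `F_q` with `q = p^m`, `p` an odd prime. -/
theorem numOrbits_two_char_odd {F : Type*} [Field F] [Fintype F] [DecidableEq F]
    (p m q : ℕ) (hp : p.Prime) (hodd : p ≠ 2) (hm : 1 ≤ m) (hq : q = p ^ m)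
    (hcard : Fintype.card F = q) :
    (numOrbits F 2 : ℚ) =
      if 3 ∣ (q - 1) then ((q : ℚ) + 1) ^ 2 / 2
      else ((q : ℚ) + 1) ^ 2 / 2 - 1 :=
  numOrbits_two_char_odd_general p m q hp hodd hq hcard
end

section
/- Let q be a prime power and F_q a finite field with q elements, and let id be the identity permutation of {1,2}. Then Σ_{t ∈ (F_q^×)^2} |Fix_2(id,t)| = (q^2−1)(q^2−q) + 2·P_3·(q−1)^2, where P_3 = 1 if 3 | (q−1) and 0 otherwise. Here Fix_2(id,t) = {A ∈ GL_2(F_q) : t_i A_{ij} = A_{ij} t_j^2 for all i, j}. -/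
open Matrix

/-- The set of fixed points of `(σ, t)` in `GL n F` under the action
`(σ,t)·A = D_t⁻¹ P_σ⁻¹ A P_σ D_t²`, i.e. the invertible matrices `A` with
`t_i A_{ij} = A_{σ(i)σ(j)} t_j²` for all `i, j`. -/
def fixSet (F : Type*) [Field F] (n : ℕ) (σ : Equiv.Perm (Fin n)) (t : Fin n → Fˣ) :
    Set (GL (Fin n) F) :=
  {A | ∀ i j, (t i : F) * (A : Matrix (Fin n) (Fin n) F) i j
        = (A : Matrix (Fin n) (Fin n) F) (σ i) (σ j) * (t j : F) ^ 2}

/-! For `σ = id` the fixed-point condition reads `(t i - t j ^ 2) * A i j = 0`, so `Fix(t)`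
consists of the invertible matrices supported on `{(i, j) | t i = t j ^ 2}`. For `t = 1` this is
all of `GL₂`. Otherwise every row needs an admissible entry, and since `t i = t i ^ 2` forces
`t i = 1`, the only remaining `t ≠ 1` are `t = (a ^ 2, a)` with `a ^ 3 = 1`, `a ≠ 1`; there
`Fix(t)` is the set of invertible antidiagonal matrices, of size `(q - 1) ^ 2`. As `F_qˣ` is
cyclic it has `gcd (q - 1, 3) - 1 = 2 P₃` such `a`. -/

open Finset

section Group

variable {G : Type*} [Group G]

theorem self_eq_sq_iff {a : G} : a = a ^ 2 ↔ a = 1 := by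
  rw [sq, left_eq_mul]

def sqPairsEquivCubeRoots :
    {t : Fin 2 → G // t 0 = t 1 ^ 2 ∧ t 1 = t 0 ^ 2} ≃ {a : G // a ^ 3 = 1} where
  toFun t := ⟨t.1 1, by
    obtain ⟨h0, h1⟩ := t.2
    refine (left_eq_mul (a := t.1 1)).mp ?_
    calc t.1 1 = (t.1 1 ^ 2) ^ 2 := by rw [← h0, ← h1]
      _ = t.1 1 * t.1 1 ^ 3 := by group⟩
  invFun a := ⟨![a.1 ^ 2, a.1], rfl, by
    show a.1 = (a.1 ^ 2) ^ 2
    rw [← pow_mul, show 2 * 2 = 3 + 1 from rfl, pow_succ, a.2, one_mul]⟩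
  left_inv t := by
    ext i
    fin_cases i
    · exact t.2.1.symm
    · rfl
  right_inv a := rfl

theorem card_sqPairs_ne_one [Fintype G] [DecidableEq G] :
    #{t ∈ ({1}ᶜ : Finset (Fin 2 → G)) | t 0 = t 1 ^ 2 ∧ t 1 = t 0 ^ 2}
      = Nat.card {a : G // a ^ 3 = 1} - 1 := by
  rw [← Nat.card_congr sqPairsEquivCubeRoots, Nat.card_eq_fintype_card, Fintype.card_subtype,
    compl_singleton, filter_erase, card_erase_of_mem]
  simp

end Group

theorem Nat.gcd_three_eq_ite (m : ℕ) : m.gcd 3 = if 3 ∣ m then 3 else 1 := by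
  split_ifs with h
  · exact Nat.gcd_eq_right h
  · exact Nat.coprime_comm.mp ((Nat.Prime.coprime_iff_not_dvd Nat.prime_three).mpr h)

theorem card_cubeRoots_units {F : Type*} [Field F] [Finite F] :
    Nat.card {a : Fˣ // a ^ 3 = 1} = (Nat.card F - 1).gcd 3 := by
  rw [← Nat.card_units, ← IsCyclic.card_powMonoidHom_ker]
  exact Nat.card_congr (Equiv.subtypeEquivRight fun a => by simp)

section FixSet

variable {F : Type*} [Field F] {n : ℕ}

theorem mem_fixSet_one_iff {t : Fin n → Fˣ} {A : GL (Fin n) F} :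
    A ∈ fixSet F n 1 t ↔
      ∀ i j, t i ≠ t j ^ 2 → (A : Matrix (Fin n) (Fin n) F) i j = 0 := by
  simp only [fixSet, Set.mem_ofPred_eq, Equiv.Perm.coe_one, id]
  refine forall₂_congr fun i j => ?_
  rw [← sub_eq_zero, mul_comm _ ((t j : F) ^ 2), ← sub_mul, mul_eq_zero, sub_eq_zero,
    or_iff_not_imp_left, ← Units.val_pow_eq_pow_val, ← Units.ext_iff]

theorem fixSet_one_one : fixSet F n 1 1 = Set.univ := by
  simp [fixSet]

theorem fixSet_one_eq_empty {t : Fin n → Fˣ} (i : Fin n) (hi : ∀ j, t i ≠ t j ^ 2) :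
    fixSet F n 1 t = ∅ :=
  Set.eq_empty_of_forall_notMem fun A hA =>
    A.det_ne_zero (det_eq_zero_of_row_eq_zero i fun j => mem_fixSet_one_iff.mp hA i j (hi j))

def antidiagonalGLEquiv :
    {A : GL (Fin 2) F // (A : Matrix (Fin 2) (Fin 2) F) 0 0 = 0 ∧
      (A : Matrix (Fin 2) (Fin 2) F) 1 1 = 0} ≃ Fˣ × Fˣ where
  toFun A :=
    have h : A.1.1 0 1 * A.1.1 1 0 ≠ 0 := by
      simpa [det_fin_two, A.2.1, A.2.2] using A.1.det_ne_zero
    (Units.mk0 (A.1.1 0 1) (left_ne_zero_of_mul h),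
      Units.mk0 (A.1.1 1 0) (right_ne_zero_of_mul h))
  invFun p :=
    ⟨GeneralLinearGroup.mkOfDetNeZero !![0, (p.1 : F); (p.2 : F), 0] (by simp), rfl, rfl⟩
  left_inv A := by
    ext i j
    fin_cases i <;> fin_cases j <;> simp [A.2.1, A.2.2]
  right_inv p := by ext <;> rfl

theorem card_fixSet_two_one_of_ne_one [Finite F] [DecidableEq F] {t : Fin 2 → Fˣ}
    (ht : t ≠ 1) :
    Nat.card (fixSet F 2 1 t) =
      if t 0 = t 1 ^ 2 ∧ t 1 = t 0 ^ 2 then (Nat.card F - 1) ^ 2 else 0 := by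
  have ht' : ¬(t 0 = 1 ∧ t 1 = 1) := fun h => ht (funext (Fin.forall_fin_two.mpr h))
  split_ifs with h
  · obtain ⟨h01, h10⟩ := h
    have h0 : t 0 ≠ 1 := fun h0 => ht' ⟨h0, by rw [h10, h0, one_pow]⟩
    have hA : fixSet F 2 1 t = {A : GL (Fin 2) F | (A : Matrix (Fin 2) (Fin 2) F) 0 0 = 0 ∧
        (A : Matrix (Fin 2) (Fin 2) F) 1 1 = 0} := by
      have hne : t 0 ≠ t 1 := fun h => h0 (self_eq_sq_iff.mp (h.trans h10))
      ext A
      simp [mem_fixSet_one_iff, Fin.forall_fin_two, hne, hne.symm, ← h01, ← h10]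
    rw [hA, ← Nat.card_units, sq, ← Nat.card_prod]
    exact Nat.card_congr antidiagonalGLEquiv
  · suffices fixSet F 2 1 t = ∅ by simp [this]
    by_cases h0 : t 0 = 1
    · have h1 : t 1 ≠ 1 := fun h1 => ht' ⟨h0, h1⟩
      refine fixSet_one_eq_empty 1 (Fin.forall_fin_two.mpr ⟨?_, mt self_eq_sq_iff.mp h1⟩)
      rwa [h0, one_pow]
    by_cases h01 : t 0 = t 1 ^ 2
    · have h10 : t 1 ≠ t 0 ^ 2 := fun h10 => h ⟨h01, h10⟩
      have h1 : t 1 ≠ 1 := fun h1 => h0 (by rw [h01, h1, one_pow])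
      exact fixSet_one_eq_empty 1 (Fin.forall_fin_two.mpr ⟨h10, mt self_eq_sq_iff.mp h1⟩)
    · exact fixSet_one_eq_empty 0 (Fin.forall_fin_two.mpr ⟨mt self_eq_sq_iff.mp h0, h01⟩)

end FixSet

theorem sum_card_fixSet_two_one {F : Type*} [Field F] [Fintype F] [DecidableEq F] :
    ∑ t : Fin 2 → Fˣ, Nat.card ↥(fixSet F 2 1 t)
      = Nat.card (GL (Fin 2) F)
        + (Nat.card {a : Fˣ // a ^ 3 = 1} - 1) * (Nat.card F - 1) ^ 2 := by
  rw [← card_sqPairs_ne_one, Fintype.sum_eq_add_sum_compl 1, fixSet_one_one, Nat.card_univ,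
    card_filter, sum_mul]
  congr 1
  refine sum_congr rfl fun t ht => ?_
  rw [card_fixSet_two_one_of_ne_one (by simpa using ht), ite_mul, one_mul, zero_mul]

/-- For `n = 2` and `σ` the identity permutation, the total number of fixed points is
`(q²−1)(q²−q) + 2·P₃·(q−1)²`. -/
theorem sum_card_fixSet_two_id {F : Type*} [Field F] [Fintype F] [DecidableEq F]
    (q : ℕ) (hcard : Fintype.card F = q) :
    ∑ t : Fin 2 → Fˣ, Nat.card ↥(fixSet F 2 1 t)
      = (q ^ 2 - 1) * (q ^ 2 - q)
        + 2 * (if 3 ∣ (q - 1) then 1 else 0) * (q - 1) ^ 2 := by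
  subst hcard
  rw [sum_card_fixSet_two_one, card_cubeRoots_units, Nat.gcd_three_eq_ite, card_GL_field,
    Fin.prod_univ_two, Nat.card_eq_fintype_card]
  split_ifs <;> simp
end

section
/- Let q = p^m be a prime power and F_q a finite field with q elements, and let σ be any 3-cycle in the symmetric group on {1,2,3}. Then Σ_{t ∈ (F_q^×)^3} |Fix_3(σ,t)| equals q^2(q−1)^3 if p = 3; (q−1)^5 if 3 | (q−1); and (q−1)^4(q+1) if p ≠ 3 and 3 ∤ (q−1). Moreover, for t = (t_1,t_2,t_3) ∈ (F_q^×)^3, Fix_3(σ,t) is nonempty only if t_1 t_2 t_3 = 1. -/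
open Matrix

/-!
Conjugate elements of `Sₙ ⋉ (Fˣ)ⁿ` have equinumerous fixed-point sets. A 3-cycle is conjugate
by a permutation to the rotation `i ↦ i + 1`, and if `t₀t₁t₂ = 1` then `(rotation, t)` is conjugate
by a diagonal element to `(rotation, 1)`. If `t₀t₁t₂ ≠ 1` there are no fixed points at all: taking
determinants in `D_t A = P_σ⁻¹ A P_σ D_t²` gives `∏ tᵢ = ∏ tᵢ²`.

The matrices fixed by `(rotation, 1)` are the invertible circulant matrices, and
`det circ(v) = (v₀ + v₁ + v₂)(x² + xy + y²)` with `x = v₀ - v₁`, `y = v₁ - v₂`. In characteristic 3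
this is `(v₀ + v₁ + v₂)³`. Otherwise the quadratic form splits into two independent linear forms
when `F` contains a primitive cube root of unity, i.e. when `3 ∣ q - 1`, and is anisotropic when it
does not. So there are `q²(q - 1)`, `(q - 1)³` or `(q - 1)(q² - 1)` invertible circulants, each
counted once for each of the `(q - 1)²` admissible `t`.
-/

open Equiv

theorem exists_apply_finRotate_eq_mul {G : Type*} [CommGroup G] {n : ℕ} {t : Fin (n + 1) → G}
    (ht : ∏ i, t i = 1) : ∃ s : Fin (n + 1) → G, ∀ i, s (finRotate (n + 1) i) = t i * s i := by
  refine ⟨Fin.partialProd fun j ↦ t j.castSucc, Fin.lastCases ?_ fun j ↦ ?_⟩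
  · rw [finRotate_last, Fin.partialProd_zero, ← ht, Fin.prod_univ_castSucc, mul_comm,
      Fin.partialProd, Fin.val_last, List.take_of_length_le (by simp), List.prod_ofFn]
  · rw [finRotate_apply, Fin.coeSucc_eq_succ, Fin.partialProd_succ, mul_comm]

theorem card_fin_succ_prod_eq_one (G : Type*) [CommGroup G] (n : ℕ) :
    Nat.card {t : Fin (n + 1) → G // ∏ i, t i = 1} = Nat.card G ^ n := by
  calc Nat.card {t : Fin (n + 1) → G // ∏ i, t i = 1}
    _ = Nat.card (Fin n → G) := Nat.card_congr
      { toFun t := Fin.tail t.1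
        invFun f := ⟨Fin.cons (∏ i, f i)⁻¹ f, by simp [Fin.prod_univ_succ]⟩
        left_inv t := by
          refine Subtype.ext (funext (Fin.cases ?_ fun i ↦ rfl))
          exact inv_eq_of_mul_eq_one_left (by simpa [Fin.prod_univ_succ, Fin.tail] using t.2)
        right_inv f := rfl }
    _ = Nat.card G ^ n := by rw [Nat.card_fun, Nat.card_fin]

theorem natCard_subtype_ne {α : Type*} [Fintype α] (a : α) :
    Nat.card {x : α // x ≠ a} = Fintype.card α - 1 := by
  classical
  rw [Nat.card_eq_fintype_card]
  exact Set.card_ne_eq a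

theorem det_circulant_fin_three {R : Type*} [CommRing R] (v : Fin 3 → R) :
    (circulant v).det =
      (v 0 + v 1 + v 2) * ((v 0 - v 1) ^ 2 + (v 0 - v 1) * (v 1 - v 2) + (v 1 - v 2) ^ 2) := by
  have h1 : (-1 : Fin 3) = 2 := rfl
  have h2 : (-2 : Fin 3) = 1 := rfl
  simp [det_fin_three, circulant_apply, h1, h2]
  ring

section FixSet

variable {F : Type*} [Field F] {n : ℕ}

theorem prod_eq_one_of_mem_fixSet {σ : Perm (Fin n)} {t : Fin n → Fˣ} {A : GL (Fin n) F}
    (hA : A ∈ fixSet F n σ t) : ∏ i, (t i : F) = 1 := by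
  have hmat : diagonal (fun i ↦ (t i : F)) * A =
      (A : Matrix (Fin n) (Fin n) F).submatrix σ σ * diagonal (fun j ↦ (t j : F) ^ 2) := by
    ext i j
    simp only [diagonal_mul, mul_diagonal, submatrix_apply, hA i j]
  have hdet := congrArg det hmat
  rw [det_mul, det_mul, det_diagonal, det_diagonal, det_submatrix_equiv_self,
    Finset.prod_pow, mul_comm] at hdet
  have hT : ∏ i, (t i : F) = (∏ i, (t i : F)) ^ 2 := mul_left_cancel₀ A.det_ne_zero hdet
  have hT0 : ∏ i, (t i : F) ≠ 0 := Finset.prod_ne_zero_iff.2 fun i _ ↦ (t i).ne_zero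
  exact (mul_left_cancel₀ hT0 ((mul_one _).trans (hT.trans (sq _)))).symm

theorem card_fixSet_conj (τ σ : Perm (Fin n)) (t : Fin n → Fˣ) :
    Nat.card (fixSet F n (τ * σ * τ⁻¹) t) = Nat.card (fixSet F n σ (t ∘ τ)) := by
  let e : GL (Fin n) F ≃* GL (Fin n) F := Units.mapEquiv (reindexAlgEquiv F F τ.symm).toMulEquiv
  refine Nat.card_congr (e.toEquiv.subtypeEquiv fun A ↦ ?_)
  simp only [fixSet, Set.mem_ofPred_eq, MulEquiv.toEquiv_eq_coe, MulEquiv.coe_toEquiv, e,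
    Units.coe_mapEquiv, Perm.coe_mul, Perm.coe_inv, Function.comp_apply, MulEquiv.coe_mk,
    AlgEquiv.toEquiv_eq_coe, toEquiv_reindexAlgEquiv, reindex_apply, symm_symm, submatrix_apply]
  rw [← τ.forall_congr_right]
  refine forall_congr' fun i ↦ ?_
  rw [← τ.forall_congr_right]
  simp only [symm_apply_apply]

theorem sum_card_fixSet_eq_of_isConj [Fintype F] [DecidableEq F] {σ σ' : Perm (Fin n)}
    (h : IsConj σ σ') :
    ∑ t : Fin n → Fˣ, Nat.card (fixSet F n σ t) = ∑ t, Nat.card (fixSet F n σ' t) := by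
  obtain ⟨τ, rfl⟩ := isConj_iff.1 h
  simp only [card_fixSet_conj]
  exact (Equiv.sum_comp (τ.symm.arrowCongr (Equiv.refl Fˣ)) fun t ↦ Nat.card (fixSet F n σ t)).symm

def diagonalGL (s : Fin n → Fˣ) : GL (Fin n) F :=
  ⟨diagonal fun i ↦ s i, diagonal fun i ↦ ↑(s i)⁻¹, by simp, by simp⟩

theorem diagonalGL_mul_mul_diagonalGL_apply (s r : Fin n → Fˣ) (A : GL (Fin n) F) (i j : Fin n) :
    ((diagonalGL s * A * diagonalGL r : GL (Fin n) F) : Matrix (Fin n) (Fin n) F) i j =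
      s i * (A : Matrix (Fin n) (Fin n) F) i j * r j := by
  simp [diagonalGL, diagonal_mul, mul_diagonal]

theorem card_fixSet_eq_card_fixSet_one {σ : Perm (Fin n)} {t : Fin n → Fˣ} (s : Fin n → Fˣ)
    (hs : ∀ i, s (σ i) = t i * s i) :
    Nat.card (fixSet F n σ t) = Nat.card (fixSet F n σ 1) := by
  refine (Nat.card_congr (((Equiv.mulLeft (diagonalGL s)).trans
    (Equiv.mulRight (diagonalGL fun j ↦ (s j ^ 2)⁻¹))).subtypeEquiv fun A ↦ ?_)).symm
  refine forall₂_congr fun i j ↦ ?_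
  simp only [Equiv.trans_apply, Equiv.coe_mulLeft, Equiv.coe_mulRight,
    diagonalGL_mul_mul_diagonalGL_apply, hs]
  push_cast
  simp only [Pi.one_apply, Units.val_one, one_mul, one_pow, mul_one]
  have hc : (t i * s i * ((s j : F) ^ 2)⁻¹ : F) ≠ 0 := by simp
  rw [← mul_right_inj' hc]
  refine Eq.congr ?_ ?_ <;> field_simp

theorem mem_fixSet_finRotate_one_iff {A : GL (Fin (n + 1)) F} :
    A ∈ fixSet F (n + 1) (finRotate (n + 1)) 1 ↔
      (A : Matrix (Fin (n + 1)) (Fin (n + 1)) F) = circulant fun i ↦ A i 0 := by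
  simp only [fixSet, Set.mem_ofPred_eq, Pi.one_apply, Units.val_one, one_mul, one_pow, mul_one,
    finRotate_apply]
  constructor
  · intro h
    have hshift : ∀ k i j, (A : Matrix (Fin (n + 1)) (Fin (n + 1)) F) i j = A (i + k) (j + k) := by
      refine Fin.induction (by simp) fun k ih i j ↦ ?_
      rw [ih, h, ← Fin.coeSucc_eq_succ, add_assoc, add_assoc]
    ext i j
    simpa [sub_eq_add_neg] using hshift (-j) i j
  · intro h i j
    rw [h]
    simp [circulant_apply]

theorem card_fixSet_finRotate_one :
    Nat.card (fixSet F (n + 1) (finRotate (n + 1)) 1) =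
      Nat.card {v : Fin (n + 1) → F // (circulant v).det ≠ 0} :=
  Nat.card_congr
    { toFun A := ⟨fun i ↦ A.1 i 0, by
        rw [← mem_fixSet_finRotate_one_iff.1 A.2]
        exact A.1.det_ne_zero⟩
      invFun v := ⟨GeneralLinearGroup.mkOfDetNeZero _ v.2, mem_fixSet_finRotate_one_iff.2 (by simp)⟩
      left_inv A := Subtype.ext (Units.ext (mem_fixSet_finRotate_one_iff.1 A.2).symm)
      right_inv v := Subtype.ext (funext fun i ↦ circulant_col_zero_eq _ _) }

theorem card_fixSet_finRotate [DecidableEq F] (t : Fin (n + 1) → Fˣ) :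
    Nat.card (fixSet F (n + 1) (finRotate (n + 1)) t) =
      if ∏ i, t i = 1 then Nat.card {v : Fin (n + 1) → F // (circulant v).det ≠ 0} else 0 := by
  split_ifs with ht
  · obtain ⟨s, hs⟩ := exists_apply_finRotate_eq_mul ht
    rw [card_fixSet_eq_card_fixSet_one s hs, card_fixSet_finRotate_one]
  · refine Nat.card_eq_zero.2 (.inl ⟨fun ⟨A, hA⟩ ↦ ht (Units.ext ?_)⟩)
    simpa using prod_eq_one_of_mem_fixSet hA

theorem sum_card_fixSet_of_isConj_finRotate [Fintype F] [DecidableEq F] {σ : Perm (Fin (n + 1))}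
    (hσ : IsConj σ (finRotate (n + 1))) :
    ∑ t : Fin (n + 1) → Fˣ, Nat.card (fixSet F (n + 1) σ t) =
      (Fintype.card F - 1) ^ n * Nat.card {v : Fin (n + 1) → F // (circulant v).det ≠ 0} := by
  rw [sum_card_fixSet_eq_of_isConj hσ]
  simp only [card_fixSet_finRotate]
  rw [Finset.sum_ite, Finset.sum_const_zero, add_zero, Finset.sum_const, smul_eq_mul,
    ← Fintype.card_subtype, ← Nat.card_eq_fintype_card, card_fin_succ_prod_eq_one, Nat.card_units,
    Nat.card_eq_fintype_card]

end FixSet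

section FiniteField

variable {F : Type*} [Field F] [Fintype F]

theorem natCast_eq_zero_iff_of_card_eq_pow {p m ℓ : ℕ} (hp : p.Prime) (hℓ : ℓ.Prime)
    (hcard : Fintype.card F = p ^ m) : (ℓ : F) = 0 ↔ p = ℓ := by
  have : Fact p.Prime := ⟨hp⟩
  have : CharP F p := charP_of_card_eq_prime_pow hcard
  rw [CharP.cast_eq_zero_iff F p, Nat.prime_dvd_prime_iff_eq hp hℓ]

theorem natCast_ne_zero_of_dvd_card_sub_one {d : ℕ} (h : d ∣ Fintype.card F - 1) :
    (d : F) ≠ 0 := by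
  obtain ⟨k, hk⟩ := h
  intro hd
  have : ((Fintype.card F - 1 : ℕ) : F) = 0 := by rw [hk, Nat.cast_mul, hd, zero_mul]
  rw [Nat.cast_sub Fintype.card_pos, FiniteField.cast_card_eq_zero] at this
  simp at this

theorem exists_isPrimitiveRoot_of_dvd_card_sub_one {k : ℕ} (hk : k.Prime)
    (h : k ∣ Fintype.card F - 1) : ∃ ω : F, IsPrimitiveRoot ω k := by
  have : Fact k.Prime := ⟨hk⟩
  obtain ⟨x, hx⟩ := exists_prime_orderOf_dvd_card' (G := Fˣ) k
    (by rwa [Nat.card_units, Nat.card_eq_fintype_card])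
  exact ⟨x, IsPrimitiveRoot.coe_units_iff.2 (IsPrimitiveRoot.iff_orderOf.2 hx)⟩

theorem IsPrimitiveRoot.dvd_card_sub_one {ω : F} {k : ℕ} (hω : IsPrimitiveRoot ω k)
    (hk : k ≠ 0) : k ∣ Fintype.card F - 1 :=
  hω.dvd_of_pow_eq_one _ (FiniteField.pow_card_sub_one_eq_one ω (hω.ne_zero hk))

theorem card_det_circulant_ne_zero_of_three_eq_zero (h3 : (3 : F) = 0) :
    Nat.card {v : Fin 3 → F // (circulant v).det ≠ 0} =
      (Fintype.card F - 1) * Fintype.card F ^ 2 := by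
  let e : (Fin 3 → F) ≃ F × (F × F) :=
    { toFun v := (v 0 + v 1 + v 2, v 1, v 2)
      invFun w := ![w.1 - w.2.1 - w.2.2, w.2.1, w.2.2]
      left_inv v := by ext j; fin_cases j <;> simp; ring
      right_inv w := by ext <;> simp; ring }
  have hdet (v : Fin 3 → F) : (circulant v).det = (v 0 + v 1 + v 2) ^ 3 := by
    rw [det_circulant_fin_three]
    -- the difference is 3 times a cubic form
    linear_combination (-(v 0 ^ 2 * v 1 + v 0 ^ 2 * v 2 + v 1 ^ 2 * v 0 + v 1 ^ 2 * v 2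
      + v 2 ^ 2 * v 0 + v 2 ^ 2 * v 1 + 3 * v 0 * v 1 * v 2)) * h3
  calc Nat.card {v : Fin 3 → F // (circulant v).det ≠ 0}
    _ = Nat.card {w : F × (F × F) // w.1 ≠ 0} :=
      Nat.card_congr (e.subtypeEquiv fun v ↦ by simp [hdet, e])
    _ = _ := by
      rw [Nat.card_congr (Equiv.prodSubtypeFstEquivSubtypeProd (p := (· ≠ 0))), Nat.card_prod,
        natCard_subtype_ne, Nat.card_prod, Nat.card_eq_fintype_card, sq]

theorem card_det_circulant_ne_zero_of_three_ne_zero (h3 : (3 : F) ≠ 0) :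
    Nat.card {v : Fin 3 → F // (circulant v).det ≠ 0} =
      (Fintype.card F - 1) * Nat.card {u : F × F // u.1 ^ 2 + u.1 * u.2 + u.2 ^ 2 ≠ 0} := by
  let e : (Fin 3 → F) ≃ F × (F × F) :=
    { toFun v := (v 0 + v 1 + v 2, v 0 - v 1, v 1 - v 2)
      invFun w := ![(w.1 + 2 * w.2.1 + w.2.2) / 3, (w.1 - w.2.1 + w.2.2) / 3,
        (w.1 - w.2.1 - 2 * w.2.2) / 3]
      left_inv v := by ext j; fin_cases j <;> simp <;> field_simp <;> ring
      right_inv w := by ext <;> simp <;> field_simp <;> ring }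
  calc Nat.card {v : Fin 3 → F // (circulant v).det ≠ 0}
    _ = Nat.card {w : F × (F × F) // w.1 ≠ 0 ∧ w.2.1 ^ 2 + w.2.1 * w.2.2 + w.2.2 ^ 2 ≠ 0} :=
      Nat.card_congr (e.subtypeEquiv fun v ↦ by simp [det_circulant_fin_three, e])
    _ = _ := by
      rw [Nat.card_congr (Equiv.subtypeProdEquivProd (p := (· ≠ 0))
        (q := fun u : F × F ↦ u.1 ^ 2 + u.1 * u.2 + u.2 ^ 2 ≠ 0)), Nat.card_prod,
        natCard_subtype_ne]

theorem card_quadratic_ne_zero_of_isPrimitiveRoot {ω : F} (hω : IsPrimitiveRoot ω 3) :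
    Nat.card {u : F × F // u.1 ^ 2 + u.1 * u.2 + u.2 ^ 2 ≠ 0} = (Fintype.card F - 1) ^ 2 := by
  have hroot : ω ^ 2 + ω + 1 = 0 := by
    have := hω.geom_sum_eq_zero (by norm_num)
    simp only [Finset.sum_range_succ, Finset.sum_range_zero] at this
    linear_combination this
  have h0 : ω ≠ 0 := hω.ne_zero (by norm_num)
  have h1 : 1 - ω ≠ 0 := sub_ne_zero.2 (hω.ne_one (by norm_num)).symm
  let e : F × F ≃ F × F :=
    { toFun u := (u.1 - ω * u.2, u.1 - ω ^ 2 * u.2)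
      invFun w := (w.1 + ω * (w.2 - w.1) / (ω - ω ^ 2), (w.2 - w.1) / (ω - ω ^ 2))
      left_inv u := by ext <;> dsimp only <;> field_simp <;> ring
      right_inv w := by ext <;> dsimp only <;> field_simp <;> ring }
  have hfactor (x y : F) : x ^ 2 + x * y + y ^ 2 = (x - ω * y) * (x - ω ^ 2 * y) := by
    linear_combination (x * y + (1 - ω) * y ^ 2) * hroot
  calc Nat.card {u : F × F // u.1 ^ 2 + u.1 * u.2 + u.2 ^ 2 ≠ 0}
    _ = Nat.card {w : F × F // w.1 ≠ 0 ∧ w.2 ≠ 0} :=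
      Nat.card_congr (e.subtypeEquiv fun u ↦ by simp [hfactor, e])
    _ = _ := by
      rw [Nat.card_congr (Equiv.subtypeProdEquivProd (p := (· ≠ 0)) (q := (· ≠ 0))), Nat.card_prod,
        natCard_subtype_ne, sq]

theorem card_quadratic_ne_zero_of_forall_not_isPrimitiveRoot (h3 : (3 : F) ≠ 0)
    (h : ∀ ω : F, ¬IsPrimitiveRoot ω 3) :
    Nat.card {u : F × F // u.1 ^ 2 + u.1 * u.2 + u.2 ^ 2 ≠ 0} = Fintype.card F ^ 2 - 1 := by
  have : NeZero ((3 : ℕ) : F) := ⟨by exact_mod_cast h3⟩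
  have hanisotropic (u : F × F) : u.1 ^ 2 + u.1 * u.2 + u.2 ^ 2 = 0 ↔ u = 0 := by
    refine ⟨fun hu ↦ ?_, fun hu ↦ by simp [hu]⟩
    by_cases hy : u.2 = 0
    · have hx : u.1 = 0 := by simpa [hy] using hu
      exact Prod.ext hx hy
    · refine absurd (Polynomial.isRoot_cyclotomic_iff.1 ?_) (h (u.1 / u.2))
      simp only [Polynomial.cyclotomic_three, Polynomial.IsRoot, Polynomial.eval_add,
        Polynomial.eval_pow, Polynomial.eval_X, Polynomial.eval_one]
      field_simp
      linear_combination hu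
  calc Nat.card {u : F × F // u.1 ^ 2 + u.1 * u.2 + u.2 ^ 2 ≠ 0}
    _ = Nat.card {u : F × F // u ≠ 0} :=
      Nat.card_congr (Equiv.subtypeEquivRight fun u ↦ (hanisotropic u).not)
    _ = _ := by rw [natCard_subtype_ne, Fintype.card_prod, sq]

end FiniteField

theorem sum_card_fixSet_three_cycle_general {F : Type*} [Field F] [Fintype F] [DecidableEq F]
    (p m q : ℕ) (hp : p.Prime) (hq : q = p ^ m)
    (hcard : Fintype.card F = q) (σ : Equiv.Perm (Fin 3)) (hσ : σ.IsThreeCycle) :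
    (p = 3 → ∑ t : Fin 3 → Fˣ, Nat.card ↥(fixSet F 3 σ t) = q ^ 2 * (q - 1) ^ 3)
      ∧ (3 ∣ (q - 1) → ∑ t : Fin 3 → Fˣ, Nat.card ↥(fixSet F 3 σ t) = (q - 1) ^ 5)
      ∧ (p ≠ 3 → ¬ 3 ∣ (q - 1) →
          ∑ t : Fin 3 → Fˣ, Nat.card ↥(fixSet F 3 σ t) = (q - 1) ^ 4 * (q + 1))
      ∧ ∀ t : Fin 3 → Fˣ, (fixSet F 3 σ t).Nonempty →
          (t 0 : F) * (t 1 : F) * (t 2 : F) = 1 := by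
  have hconj : IsConj σ (finRotate 3) :=
    Perm.isConj_iff_cycleType_eq.2 (by rw [hσ.cycleType, cycleType_finRotate])
  have hsum := sum_card_fixSet_of_isConj_finRotate (F := F) hconj
  rw [hcard] at hsum
  have hchar3 : (3 : F) = 0 ↔ p = 3 := by
    exact_mod_cast natCast_eq_zero_iff_of_card_eq_pow hp Nat.prime_three (hcard.trans hq)
  refine ⟨fun hp3 ↦ ?_, fun hdvd ↦ ?_, fun hp3 hdvd ↦ ?_, fun t ⟨A, hA⟩ ↦ ?_⟩
  · rw [hsum, card_det_circulant_ne_zero_of_three_eq_zero (hchar3.2 hp3), hcard]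
    ring
  · obtain ⟨ω, hω⟩ := exists_isPrimitiveRoot_of_dvd_card_sub_one Nat.prime_three (hcard ▸ hdvd)
    have h3 : (3 : F) ≠ 0 := by exact_mod_cast natCast_ne_zero_of_dvd_card_sub_one (hcard ▸ hdvd)
    rw [hsum, card_det_circulant_ne_zero_of_three_ne_zero h3,
      card_quadratic_ne_zero_of_isPrimitiveRoot hω, hcard]
    ring
  · have hnoroot (ω : F) (hω : IsPrimitiveRoot ω 3) : False :=
      hdvd (hcard ▸ hω.dvd_card_sub_one three_ne_zero)
    rw [hsum, card_det_circulant_ne_zero_of_three_ne_zero (mt hchar3.1 hp3),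
      card_quadratic_ne_zero_of_forall_not_isPrimitiveRoot (mt hchar3.1 hp3) hnoroot, hcard,
      show q ^ 2 - 1 = (q + 1) * (q - 1) by simpa using Nat.sq_sub_sq q 1]
    ring
  · simpa [Fin.prod_univ_three] using prod_eq_one_of_mem_fixSet hA

/-- For `n = 3` and `σ` any 3-cycle in `S₃`, the total number of fixed points is
`q²(q−1)³` if `p = 3`, `(q−1)⁵` if `3 ∣ q−1`, and `(q−1)⁴(q+1)` if `p ≠ 3` and `3 ∤ q−1`;
moreover `Fix₃(σ,t)` is nonempty only if `t₁t₂t₃ = 1`. -/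
theorem sum_card_fixSet_three_cycle {F : Type*} [Field F] [Fintype F] [DecidableEq F]
    (p m q : ℕ) (hp : p.Prime) (hm : 0 < m) (hq : q = p ^ m)
    (hcard : Fintype.card F = q) (σ : Equiv.Perm (Fin 3)) (hσ : σ.IsThreeCycle) :
    (p = 3 → ∑ t : Fin 3 → Fˣ, Nat.card ↥(fixSet F 3 σ t) = q ^ 2 * (q - 1) ^ 3)
      ∧ (3 ∣ (q - 1) → ∑ t : Fin 3 → Fˣ, Nat.card ↥(fixSet F 3 σ t) = (q - 1) ^ 5)
      ∧ (p ≠ 3 → ¬ 3 ∣ (q - 1) →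
          ∑ t : Fin 3 → Fˣ, Nat.card ↥(fixSet F 3 σ t) = (q - 1) ^ 4 * (q + 1))
      ∧ ∀ t : Fin 3 → Fˣ, (fixSet F 3 σ t).Nonempty →
          (t 0 : F) * (t 1 : F) * (t 2 : F) = 1 :=
  sum_card_fixSet_three_cycle_general p m q hp hq hcard σ hσ
end
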